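/- Let κ, κ' be Hilbert–Schmidt operators on L^2(ℝ^d) with kernels κ(x,y), κ'(x,y), and define the density of their product ρ(κκ')(x) := ∫ κ(x,y) κ'(y,x) dy. If 1/w + 1/w' = 1/q with q, w, w' ∈ [1,∞], then ‖ρ(κκ')‖_{L^q} ≤ ∫ ‖κ̃(-r,·)‖_{L^w_c} ‖κ̃'(r,·)‖_{L^{w'}_c} dr ≤ ‖κ‖_{L^2_r L^w_c} ‖κ'‖_{L^2_r L^{w'}_c}. -/

import Mathlib

/-!
Substituting `y = x - r`, the density is `ρ(x) = ∫ κ(x, x - r) κ'(x - r, x) dr`. Minkowski's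
integral inequality moves the `L^q` norm in `x` inside the `r`-integral; for fixed `r`, Hölder's
inequality bounds the `L^q` norm of the product by the `L^w` and `L^{w'}` norms of the two
factors, and the translation `x = c + r / 2` turns these into `‖κ̃(-r, ·)‖_{L^w}` and
`‖κ̃'(r, ·)‖_{L^{w'}}`. Cauchy–Schwarz in `r`, together with `r ↦ -r`, gives the second bound.
-/

open MeasureTheory Filter Topology
open scoped ENNReal

theorem ENNReal.rpow_one_div_le_of_le_rpow_mul {p q : ℝ} (hpq : p.HolderConjugate q)
    {a R : ℝ≥0∞} (ha : a ≠ ∞) (h : a ≤ a ^ (1 / q) * R) : a ^ (1 / p) ≤ R := by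
  rcases eq_or_ne a 0 with rfl | ha0
  · rw [ENNReal.zero_rpow_of_pos (one_div_pos.2 hpq.pos)]
    exact zero_le
  have hsplit : a ^ (1 / p) * a ^ (1 / q) = a := by
    rw [← ENNReal.rpow_add _ _ ha0 ha, one_div, one_div, hpq.inv_add_inv_eq_one,
      ENNReal.rpow_one]
  have hq0 : a ^ (1 / q) ≠ 0 := (ENNReal.rpow_pos (pos_iff_ne_zero.2 ha0) ha).ne'
  have hqtop : a ^ (1 / q) ≠ ∞ := ENNReal.rpow_ne_top_of_nonneg hpq.symm.one_div_nonneg ha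
  refine (ENNReal.mul_le_mul_iff_left hq0 hqtop).1 ?_
  rw [hsplit, mul_comm]
  exact h

namespace MeasureTheory

variable {α β : Type*} [MeasurableSpace α] [MeasurableSpace β] {μ : Measure α} {ν : Measure β}

theorem Measurable.essSup_prod_left [SFinite μ] {f : α → β → ℝ≥0∞}
    (hf : Measurable (Function.uncurry f)) : Measurable fun y => essSup (fun x => f x y) μ := by
  refine measurable_of_Iio fun t => ?_
  have hnull : ∀ c : ℝ≥0∞, MeasurableSet {y | μ {x | c < f x y} = 0} := fun c =>
    measurable_measure_prodMk_right (measurableSet_lt measurable_const hf)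
      (measurableSet_singleton 0)
  -- `essSup < t` is witnessed by a rational level strictly between them
  have hpre : (fun y => essSup (fun x => f x y) μ) ⁻¹' Set.Iio t =
      ⋃ q : ℚ, ⋃ (_ : (Real.toNNReal q : ℝ≥0∞) < t),
        {y | μ {x | (Real.toNNReal q : ℝ≥0∞) < f x y} = 0} := by
    ext y
    simp only [Set.mem_preimage, Set.mem_Iio, Set.mem_iUnion, Set.mem_ofPred_eq, exists_prop]
    constructor
    · intro h
      obtain ⟨q, -, hlt, hqt⟩ := ENNReal.lt_iff_exists_rat_btwn.1 h
      refine ⟨q, hqt, ?_⟩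
      simpa only [not_le] using ae_iff.1 ((ae_lt_of_essSup_lt hlt).mono fun _ h => h.le)
    · rintro ⟨q, hqt, hq⟩
      exact (essSup_le_of_ae_le _ (ae_iff.2 (by simpa only [not_le] using hq))).trans_lt hqt
  rw [hpre]
  exact MeasurableSet.iUnion fun q => MeasurableSet.iUnion fun _ => hnull _

theorem essSup_lintegral_le [SFinite μ] [SFinite ν] {f : α → β → ℝ≥0∞}
    (hf : Measurable (Function.uncurry f)) :
    essSup (fun x => ∫⁻ y, f x y ∂ν) μ ≤ ∫⁻ y, essSup (fun x => f x y) μ ∂ν := by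
  have hle : ∀ᵐ x ∂μ, ∀ᵐ y ∂ν, f x y ≤ essSup (fun x => f x y) μ :=
    (Measure.ae_ae_comm (p := fun x y => f x y ≤ essSup (fun x => f x y) μ)
      (measurableSet_le hf ((Measurable.essSup_prod_left hf).comp measurable_snd))).2
      (ae_of_all _ fun _ => ae_le_essSup)
  exact essSup_le_of_ae_le _ (hle.mono fun _ hx => lintegral_mono_ae hx)

theorem lintegral_rpow_le_of_le_lintegral [SFinite μ] [SFinite ν] {p q : ℝ}
    (hpq : p.HolderConjugate q) {f : α → β → ℝ≥0∞} (hf : Measurable (Function.uncurry f))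
    {G : α → ℝ≥0∞} (hG : Measurable G) (hGf : ∀ x, G x ≤ ∫⁻ y, f x y ∂ν) :
    ∫⁻ x, G x ^ p ∂μ ≤
      (∫⁻ x, G x ^ p ∂μ) ^ (1 / q) * ∫⁻ y, (∫⁻ x, f x y ^ p ∂μ) ^ (1 / p) ∂ν := by
  have hp1 : 0 ≤ p - 1 := sub_nonneg.2 hpq.lt.le
  calc ∫⁻ x, G x ^ p ∂μ = ∫⁻ x, G x ^ (p - 1) * G x ∂μ := by
        refine lintegral_congr fun x => ?_
        simpa using ENNReal.rpow_add_of_nonneg (x := G x) (p - 1) 1 hp1 zero_le_one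
    _ ≤ ∫⁻ x, ∫⁻ y, G x ^ (p - 1) * f x y ∂ν ∂μ := by
        refine lintegral_mono fun x => ?_
        rw [lintegral_const_mul (f := f x) _ (hf.comp measurable_prodMk_left)]
        gcongr
        exact hGf x
    _ = ∫⁻ y, ∫⁻ x, G x ^ (p - 1) * f x y ∂μ ∂ν :=
        lintegral_lintegral_swap (((hG.comp measurable_fst).pow_const _).mul hf).aemeasurable
    _ ≤ ∫⁻ y, (∫⁻ x, (G x ^ (p - 1)) ^ q ∂μ) ^ (1 / q) * (∫⁻ x, f x y ^ p ∂μ) ^ (1 / p) ∂ν :=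
        lintegral_mono fun y => ENNReal.lintegral_mul_le_Lp_mul_Lq μ hpq.symm
          (hG.pow_const _).aemeasurable (hf.comp measurable_prodMk_right).aemeasurable
    _ = (∫⁻ x, G x ^ p ∂μ) ^ (1 / q) * ∫⁻ y, (∫⁻ x, f x y ^ p ∂μ) ^ (1 / p) ∂ν := by
        simp_rw [← ENNReal.rpow_mul, hpq.sub_one_mul_conj]
        exact lintegral_const_mul _ (((hf.pow_const p).lintegral_prod_left).pow_const _)

theorem lintegral_lintegral_rpow_le [SigmaFinite μ] [SFinite ν] {p : ℝ} (hp : 1 ≤ p)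
    {f : α → β → ℝ≥0∞} (hf : Measurable (Function.uncurry f)) :
    (∫⁻ x, (∫⁻ y, f x y ∂ν) ^ p ∂μ) ^ (1 / p) ≤ ∫⁻ y, (∫⁻ x, f x y ^ p ∂μ) ^ (1 / p) ∂ν := by
  rcases hp.eq_or_lt with rfl | hp1
  · simpa using (lintegral_lintegral_swap hf.aemeasurable).le
  have hpq := Real.HolderConjugate.conjExponent hp1
  have hp0 : 0 < p := zero_lt_one.trans hp1
  set F : α → ℝ≥0∞ := fun x => ∫⁻ y, f x y ∂ν
  set R := ∫⁻ y, (∫⁻ x, f x y ^ p ∂μ) ^ (1 / p) ∂ν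
  -- Capping `F` by `n * g ^ (1 / p)`, with `g > 0` of finite integral, makes `∫ G n ^ p` finite,
  -- so the Hölder bound `a ≤ a ^ (1 / q) * R` can be divided by `a ^ (1 / q)`.
  obtain ⟨g, hg_pos, hg_meas, hg_int⟩ := exists_pos_lintegral_lt_of_sigmaFinite μ one_ne_zero
  set h : α → ℝ≥0∞ := fun x => (g x : ℝ≥0∞) ^ (1 / p)
  set G : ℕ → α → ℝ≥0∞ := fun n x => min (F x) (n * h x)
  have hG_meas : ∀ n, Measurable (G n) := fun n =>
    hf.lintegral_prod_right.min (measurable_const.mul (hg_meas.coe_nnreal_ennreal.pow_const _))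
  have hG_fin : ∀ n, ∫⁻ x, G n x ^ p ∂μ ≠ ∞ := by
    intro n
    refine ne_top_of_le_ne_top ?_ (lintegral_mono fun x => ENNReal.rpow_le_rpow
      (min_le_right (F x) (n * h x)) hp0.le)
    simp_rw [h, ENNReal.mul_rpow_of_nonneg _ _ hp0.le, ← ENNReal.rpow_mul,
      one_div_mul_cancel hp0.ne', ENNReal.rpow_one]
    rw [lintegral_const_mul _ hg_meas.coe_nnreal_ennreal]
    exact ENNReal.mul_ne_top (ENNReal.rpow_ne_top_of_nonneg hp0.le (ENNReal.natCast_ne_top n))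
      (hg_int.trans ENNReal.one_lt_top).ne
  have hG_le : ∀ n, ∫⁻ x, G n x ^ p ∂μ ≤ R ^ p := fun n => by
    rw [← ENNReal.rpow_inv_le_iff hp0, ← one_div]
    exact ENNReal.rpow_one_div_le_of_le_rpow_mul hpq (hG_fin n)
      (lintegral_rpow_le_of_le_lintegral hpq hf (hG_meas n) fun x => min_le_left _ _)
  have hG_tendsto : Tendsto (fun n => ∫⁻ x, G n x ^ p ∂μ) atTop (𝓝 (∫⁻ x, F x ^ p ∂μ)) := by
    refine lintegral_tendsto_of_tendsto_of_monotone
      (fun n => ((hG_meas n).pow_const p).aemeasurable)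
      (ae_of_all _ fun x m n hmn => ?_) (ae_of_all _ fun x => ?_)
    · exact ENNReal.rpow_le_rpow
        (min_le_min le_rfl (mul_le_mul_left (Nat.cast_le.2 hmn) _)) hp0.le
    · have hh0 : h x ≠ 0 :=
        (ENNReal.rpow_pos (by exact_mod_cast hg_pos x) ENNReal.coe_ne_top).ne'
      have hhtop : h x ≠ ∞ := ENNReal.rpow_ne_top_of_nonneg (by positivity) ENNReal.coe_ne_top
      have hlim : Tendsto (fun n : ℕ => G n x) atTop (𝓝 (F x)) := by
        simpa [ENNReal.top_mul hh0] using tendsto_const_nhds.min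
          (ENNReal.Tendsto.mul_const ENNReal.tendsto_nat_nhds_top (Or.inr hhtop))
      exact (ENNReal.continuous_rpow_const.tendsto _).comp hlim
  rw [one_div, ENNReal.rpow_inv_le_iff hp0]
  exact le_of_tendsto' hG_tendsto hG_le

theorem eLpNorm_lintegral_le [SigmaFinite μ] [SFinite ν] {p : ℝ≥0∞} (hp : 1 ≤ p)
    {f : α → β → ℝ≥0∞} (hf : Measurable (Function.uncurry f)) :
    eLpNorm (fun x => ∫⁻ y, f x y ∂ν) p μ ≤ ∫⁻ y, eLpNorm (fun x => f x y) p μ ∂ν := by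
  rcases eq_or_ne p ∞ with rfl | hp_top
  · simpa only [eLpNorm_exponent_top, eLpNormEssSup, enorm_eq_self] using
      essSup_lintegral_le hf
  have hp0 : p ≠ 0 := (zero_lt_one.trans_le hp).ne'
  simp only [eLpNorm_eq_lintegral_rpow_enorm_toReal hp0 hp_top, enorm_eq_self]
  exact lintegral_lintegral_rpow_le
    (ENNReal.toReal_mono hp_top hp |>.trans_eq' ENNReal.toReal_one.symm) hf

theorem Measurable.eLpNorm_prod_left {E : Type*} [NormedAddCommGroup E] [MeasurableSpace E]
    [OpensMeasurableSpace E] [SFinite μ] {f : α → β → E} (hf : Measurable (Function.uncurry f))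
    (p : ℝ≥0∞) :
    Measurable fun y => eLpNorm (fun x => f x y) p μ := by
  rcases eq_or_ne p 0 with rfl | hp0
  · simp only [eLpNorm_exponent_zero, measurable_const]
  rcases eq_or_ne p ∞ with rfl | hp_top
  · simp only [eLpNorm_exponent_top, eLpNormEssSup]
    exact hf.enorm.essSup_prod_left
  simp only [eLpNorm_eq_lintegral_rpow_enorm_toReal hp0 hp_top]
  exact ((hf.enorm.pow_const _).lintegral_prod_left).pow_const _

section AddGroup

variable {G 𝕜 : Type*} [AddGroup G] [MeasurableSpace G] {μ : Measure G} [RCLike 𝕜]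

theorem eLpNorm_comp_add_right [MeasurableAdd G] [μ.IsAddRightInvariant] {F : Type*}
    [NormedAddCommGroup F] {g : G → F} (hg : AEStronglyMeasurable g μ) (a : G) (p : ℝ≥0∞) :
    eLpNorm (fun x => g (x + a)) p μ = eLpNorm g p μ :=
  eLpNorm_comp_measurePreserving hg (measurePreserving_add_right μ a)

variable [MeasurableAdd G] [MeasurableNeg G] [μ.IsAddLeftInvariant] [μ.IsNegInvariant]

theorem enorm_integral_mul_le_lintegral_sub (κ κ' : G → G → 𝕜) (x : G) :
    ‖∫ y, κ x y * κ' y x ∂μ‖ₑ ≤ ∫⁻ r, ‖κ x (x - r)‖ₑ * ‖κ' (x - r) x‖ₑ ∂μ := by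
  refine (enorm_integral_le_lintegral_enorm _).trans_eq ?_
  rw [← lintegral_sub_left_eq_self _ x]
  simp only [enorm_mul]

theorem eLpNorm_integral_mul_le [MeasurableSub₂ G] [SigmaFinite μ] {κ κ' : G → G → 𝕜}
    (hκ : Measurable (Function.uncurry κ)) (hκ' : Measurable (Function.uncurry κ'))
    {q : ℝ≥0∞} (hq : 1 ≤ q) :
    eLpNorm (fun x => ∫ y, κ x y * κ' y x ∂μ) q μ ≤
      ∫⁻ r, eLpNorm (fun x => κ x (x - r) * κ' (x - r) x) q μ ∂μ := by
  have hm : Measurable (Function.uncurry fun x r => ‖κ x (x - r)‖ₑ * ‖κ' (x - r) x‖ₑ) :=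
    (hκ.comp (f := fun p : G × G => (p.1, p.1 - p.2)) (by fun_prop)).enorm.mul
      (hκ'.comp (f := fun p : G × G => (p.1 - p.2, p.1)) (by fun_prop)).enorm
  calc eLpNorm (fun x => ∫ y, κ x y * κ' y x ∂μ) q μ
      ≤ eLpNorm (fun x => ∫⁻ r, ‖κ x (x - r)‖ₑ * ‖κ' (x - r) x‖ₑ ∂μ) q μ :=
        eLpNorm_mono_enorm fun x => (enorm_integral_mul_le_lintegral_sub κ κ' x).trans_eq
          (enorm_eq_self _).symm
    _ ≤ ∫⁻ r, eLpNorm (fun x => ‖κ x (x - r)‖ₑ * ‖κ' (x - r) x‖ₑ) q μ ∂μ :=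
        eLpNorm_lintegral_le hq hm
    _ = ∫⁻ r, eLpNorm (fun x => κ x (x - r) * κ' (x - r) x) q μ ∂μ := by
        simp_rw [← enorm_mul, eLpNorm_enorm]

end AddGroup

theorem eLpNorm_mul_le_centered {E 𝕜 : Type*} [AddCommGroup E] [Module ℝ E]
    [MeasurableSpace E] [MeasurableAdd E] [MeasurableSub E] {μ : Measure E}
    [μ.IsAddRightInvariant] [RCLike 𝕜] {κ κ' : E → E → 𝕜} (hκ : Measurable (Function.uncurry κ))
    (hκ' : Measurable (Function.uncurry κ')) {q w w' : ℝ≥0∞} [ENNReal.HolderTriple w w' q]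
    (r : E) :
    eLpNorm (fun x => κ x (x - r) * κ' (x - r) x) q μ ≤
      eLpNorm (fun c => κ (c + (2:ℝ)⁻¹ • r) (c - (2:ℝ)⁻¹ • r)) w μ *
        eLpNorm (fun c => κ' (c - (2:ℝ)⁻¹ • r) (c + (2:ℝ)⁻¹ • r)) w' μ := by
  have hmκ : Measurable fun x => κ x (x - r) :=
    hκ.comp (f := fun x => (x, x - r)) (by fun_prop)
  have hmκ' : Measurable fun x => κ' (x - r) x :=
    hκ'.comp (f := fun x => (x - r, x)) (by fun_prop)
  have hcenter : ∀ c : E, c + (2:ℝ)⁻¹ • r - r = c - (2:ℝ)⁻¹ • r := fun c => by module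
  have hshift := eLpNorm_comp_add_right (μ := μ) hmκ.aestronglyMeasurable ((2:ℝ)⁻¹ • r) w
  have hshift' := eLpNorm_comp_add_right (μ := μ) hmκ'.aestronglyMeasurable ((2:ℝ)⁻¹ • r) w'
  simp only [hcenter] at hshift hshift'
  rw [hshift, hshift']
  exact eLpNorm_smul_le_mul_eLpNorm (p := w) (q := w') (r := q) (f := fun x => κ' (x - r) x)
    (φ := fun x => κ x (x - r)) hmκ'.aestronglyMeasurable hmκ.aestronglyMeasurable

end MeasureTheory

theorem stmt_2_general (d : ℕ) (κ κ' : EuclideanSpace ℝ (Fin d) → EuclideanSpace ℝ (Fin d) → ℂ)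
    (hκ : Measurable (Function.uncurry κ)) (hκ' : Measurable (Function.uncurry κ'))
    (q w w' : ℝ≥0∞) (hq : 1 ≤ q)
    (hqww' : 1 / w + 1 / w' = 1 / q) :
    eLpNorm (fun x => ∫ y, κ x y * κ' y x) q volume ≤
      ∫⁻ r, eLpNorm (fun c => κ (c + (2:ℝ)⁻¹ • r) (c - (2:ℝ)⁻¹ • r)) w volume *
        eLpNorm (fun c => κ' (c - (2:ℝ)⁻¹ • r) (c + (2:ℝ)⁻¹ • r)) w' volume ∧
    (∫⁻ r, eLpNorm (fun c => κ (c + (2:ℝ)⁻¹ • r) (c - (2:ℝ)⁻¹ • r)) w volume *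
        eLpNorm (fun c => κ' (c - (2:ℝ)⁻¹ • r) (c + (2:ℝ)⁻¹ • r)) w' volume) ≤
      (∫⁻ r, (eLpNorm (fun c => κ (c - (2:ℝ)⁻¹ • r) (c + (2:ℝ)⁻¹ • r)) w volume) ^ 2) ^
          (1/2 : ℝ) *
      (∫⁻ r, (eLpNorm (fun c => κ' (c - (2:ℝ)⁻¹ • r) (c + (2:ℝ)⁻¹ • r)) w' volume) ^ 2) ^
          (1/2 : ℝ) := by
  have : ENNReal.HolderTriple w w' q := ⟨by simpa only [one_div] using hqww'⟩
  have hA : Measurable fun r =>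
      eLpNorm (fun c => κ (c + (2:ℝ)⁻¹ • r) (c - (2:ℝ)⁻¹ • r)) w volume :=
    Measurable.eLpNorm_prod_left (f := fun c r => κ (c + (2:ℝ)⁻¹ • r) (c - (2:ℝ)⁻¹ • r))
      (hκ.comp (f := fun p : EuclideanSpace ℝ (Fin d) × EuclideanSpace ℝ (Fin d) =>
        (p.1 + (2:ℝ)⁻¹ • p.2, p.1 - (2:ℝ)⁻¹ • p.2)) (by fun_prop)) w
  have hB : Measurable fun r =>
      eLpNorm (fun c => κ' (c - (2:ℝ)⁻¹ • r) (c + (2:ℝ)⁻¹ • r)) w' volume :=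
    Measurable.eLpNorm_prod_left (f := fun c r => κ' (c - (2:ℝ)⁻¹ • r) (c + (2:ℝ)⁻¹ • r))
      (hκ'.comp (f := fun p : EuclideanSpace ℝ (Fin d) × EuclideanSpace ℝ (Fin d) =>
        (p.1 - (2:ℝ)⁻¹ • p.2, p.1 + (2:ℝ)⁻¹ • p.2)) (by fun_prop)) w'
  refine ⟨(eLpNorm_integral_mul_le hκ hκ' hq).trans
    (lintegral_mono fun r => eLpNorm_mul_le_centered hκ hκ' r), ?_⟩
  calc _ ≤ _ := ENNReal.lintegral_mul_le_Lp_mul_Lq volume Real.HolderConjugate.two_two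
        hA.aemeasurable hB.aemeasurable
    _ = _ := by
      simp only [ENNReal.rpow_two]
      rw [← lintegral_neg_eq_self]
      simp only [smul_neg, sub_neg_eq_add, ← sub_eq_add_neg]

/-- Estimate on the density of a product of Hilbert-Schmidt operators:
`‖ρ(κκ')‖_{L^q} ≤ ∫ ‖κ̃(-r,·)‖_{L^w_c} ‖κ̃'(r,·)‖_{L^{w'}_c} dr
  ≤ ‖κ‖_{L^2_r L^w_c} ‖κ'‖_{L^2_r L^{w'}_c}` when `1/w + 1/w' = 1/q`. -/
theorem stmt_2 (d : ℕ) (κ κ' : EuclideanSpace ℝ (Fin d) → EuclideanSpace ℝ (Fin d) → ℂ)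
    (hκ : Measurable (Function.uncurry κ)) (hκ' : Measurable (Function.uncurry κ'))
    (q w w' : ℝ≥0∞) (hq : 1 ≤ q) (hw : 1 ≤ w) (hw' : 1 ≤ w')
    (hqww' : 1 / w + 1 / w' = 1 / q) :
    eLpNorm (fun x => ∫ y, κ x y * κ' y x) q volume ≤
      ∫⁻ r, eLpNorm (fun c => κ (c + (2:ℝ)⁻¹ • r) (c - (2:ℝ)⁻¹ • r)) w volume *
        eLpNorm (fun c => κ' (c - (2:ℝ)⁻¹ • r) (c + (2:ℝ)⁻¹ • r)) w' volume ∧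
    (∫⁻ r, eLpNorm (fun c => κ (c + (2:ℝ)⁻¹ • r) (c - (2:ℝ)⁻¹ • r)) w volume *
        eLpNorm (fun c => κ' (c - (2:ℝ)⁻¹ • r) (c + (2:ℝ)⁻¹ • r)) w' volume) ≤
      (∫⁻ r, (eLpNorm (fun c => κ (c - (2:ℝ)⁻¹ • r) (c + (2:ℝ)⁻¹ • r)) w volume) ^ 2) ^
          (1/2 : ℝ) *
      (∫⁻ r, (eLpNorm (fun c => κ' (c - (2:ℝ)⁻¹ • r) (c + (2:ℝ)⁻¹ • r)) w' volume) ^ 2) ^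
          (1/2 : ℝ) :=
  stmt_2_general d κ κ' hκ hκ' q w w' hq hqww'
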